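/- arXiv:2209.03551 — 2 statements merged into one kernel-verified Lean document; each statement's English description precedes it below -/
import Mathlib

section
/- Fix n ≥ 1. A one-row semistandard shifted bar tableau of shape (n) with entries in {1′, 1, 2′, 2} is a pair (w, Π) where w = (w_1, …, w_n) is weakly increasing in the order 1′ < 1 < 2′ < 2 with the letters 1′ and 2′ each occurring at most once, and Π is a partition of {1,…,n} into nonempty contiguous blocks on each of which w is constant. Define the weight of (w, Π) as the pair (a, b), where a is the number of blocks on which the value is 1′ or 1, and b the number on which it is 2′ or 2. Then for all nonnegative integers a, b, the number of such tableaux of weight (a, b) equals the number of weight (b, a). -/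
/-!
A one-row tableau is a word `1′? 1…1 2′? 2…2` whose bars are cut inside the 1-part and the
2-part separately. Rotate the row cyclically so that the 2-part comes first, carry the bar
boundaries along, and exchange 1′ ↔ 2′, 1 ↔ 2. The bars of the two parts are exchanged, so the
weight `(a, b)` becomes `(b, a)`, and the map is an involution. It stays a tableau because the
new seam between the parts sits at old position 0, which always opens a bar, and the new
position 0 is the old seam, which opens a bar because the letter changes there.
-/

open Finset
open scoped Classical

/-- A one-row semistandard shifted bar tableau of shape (n) with entries in
    {1′ < 1 < 2′ < 2}, encoded as Fin 4 with 0 = 1′, 1 = 1, 2 = 2′, 3 = 2, together with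
    the prescribed weight (a, b).  The pair x = (w, s) consists of the (weakly increasing)
    word w, in which the primed letters 1′ and 2′ each occur at most once, and the
    indicator s of the positions starting a new bar: position 0 always starts a bar, and
    a position that does not start a new bar carries the same letter as its predecessor
    (so w is constant on the contiguous blocks).  The weight (a, b) records the number of
    bars with letter 1′ or 1, and with letter 2′ or 2, respectively. -/
def IsOneRowShBT (n : ℕ) (x : (Fin n → Fin 4) × (Fin n → Bool)) (a b : ℕ) : Prop :=
  Monotone x.1 ∧
  (Finset.univ.filter (fun i => x.1 i = (0 : Fin 4))).card ≤ 1 ∧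
  (Finset.univ.filter (fun i => x.1 i = (2 : Fin 4))).card ≤ 1 ∧
  (∀ i : Fin n, (i : ℕ) = 0 → x.2 i = true) ∧
  (∀ i j : Fin n, (j : ℕ) = (i : ℕ) + 1 → x.2 j = false → x.1 j = x.1 i) ∧
  (Finset.univ.filter (fun i => x.2 i = true ∧ ((x.1 i : ℕ) < 2))).card = a ∧
  (Finset.univ.filter (fun i => x.2 i = true ∧ (2 ≤ (x.1 i : ℕ)))).card = b

open Fin.NatCast

section

variable {n : ℕ}

theorem Fin.val_lt_card_filter_iff {p : Fin n → Prop} [DecidablePred p]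
    (hp : ∀ ⦃i j⦄, i ≤ j → p j → p i) (k : Fin n) : (k : ℕ) < #{i | p i} ↔ p k := by
  constructor
  · intro hk
    by_contra hpk
    have : ({i | p i} : Finset (Fin n)) ⊆ Iio k := fun i hi => by
      simp only [mem_filter, mem_univ, true_and, mem_Iio] at hi ⊢
      exact lt_of_not_ge fun hki => hpk (hp hki hi)
    have := card_le_card this
    rw [Fin.card_Iio] at this
    omega
  · intro hpk
    have : Iic k ⊆ ({i | p i} : Finset (Fin n)) := fun i hi => by
      simp only [mem_filter, mem_univ, true_and, mem_Iic] at hi ⊢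
      exact hp hi hpk
    have := card_le_card this
    rw [Fin.card_Iic] at this
    omega

theorem Fin.card_filter_comp_add_right [NeZero n] (p : Fin n → Prop) [DecidablePred p]
    (c : Fin n) : #{i | p (i + c)} = #{i | p i} :=
  card_equiv (Equiv.addRight c) (by simp)

theorem Fin.val_add_natCast_of_le [NeZero n] (k : Fin n) {m : ℕ} (hm : m ≤ n) :
    ((k + (m : Fin n) : Fin n) : ℕ) =
      if (k : ℕ) + m < n then (k : ℕ) + m else (k : ℕ) + m - n := by
  rw [Fin.val_add_eq_ite, Fin.val_natCast]
  rcases hm.lt_or_eq with hm | rfl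
  · rw [Nat.mod_eq_of_lt hm]
    split_ifs <;> omega
  · rw [Nat.mod_self]
    split_ifs <;> omega

theorem Fin.val_add_of_val_eq_succ (c : Fin n) {i j : Fin n} (hij : (j : ℕ) = (i : ℕ) + 1) :
    ((j + c : Fin n) : ℕ) = ((i + c : Fin n) : ℕ) + 1 ∨ ((j + c : Fin n) : ℕ) = 0 := by
  rw [Fin.val_add_eq_ite, Fin.val_add_eq_ite]
  have := j.isLt
  have := c.isLt
  split_ifs <;> omega

theorem fin4_add_two_add_two (y : Fin 4) : y + 2 + 2 = y := by revert y; decide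

theorem fin4_add_two_eq_zero_iff (y : Fin 4) : y + 2 = 0 ↔ y = 2 := by revert y; decide

theorem fin4_add_two_eq_two_iff (y : Fin 4) : y + 2 = 2 ↔ y = 0 := by revert y; decide

theorem fin4_val_add_two_lt_two_iff (y : Fin 4) : ((y + 2 : Fin 4) : ℕ) < 2 ↔ 2 ≤ (y : ℕ) := by
  revert y; decide

theorem fin4_two_le_val_add_two_iff (y : Fin 4) : 2 ≤ ((y + 2 : Fin 4) : ℕ) ↔ (y : ℕ) < 2 := by
  revert y; decide

theorem fin4_add_two_le_add_two {x y : Fin 4}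
    (h : 2 ≤ (x : ℕ) ∧ (y : ℕ) < 2 ∨ x ≤ y ∧ ((x : ℕ) < 2 ↔ (y : ℕ) < 2)) : x + 2 ≤ y + 2 := by
  revert x y; decide

def numOnes (w : Fin n → Fin 4) : ℕ := #{i | (w i : ℕ) < 2}

theorem numOnes_le (w : Fin n → Fin 4) : numOnes w ≤ n :=
  (card_filter_le _ _).trans_eq (card_fin n)

theorem val_lt_numOnes_iff {w : Fin n → Fin 4} (hw : Monotone w) (k : Fin n) :
    (k : ℕ) < numOnes w ↔ (w k : ℕ) < 2 :=
  Fin.val_lt_card_filter_iff (fun _ _ hij hj => Nat.lt_of_le_of_lt (hw hij) hj) k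

variable [NeZero n]

-- Adding 2 in `Fin 4` exchanges 1′ ↔ 2′ and 1 ↔ 2.
def benderKnuth (x : (Fin n → Fin 4) × (Fin n → Bool)) : (Fin n → Fin 4) × (Fin n → Bool) :=
  (fun i => x.1 (i + numOnes x.1) + 2, fun i => x.2 (i + numOnes x.1))

theorem fst_benderKnuth_apply (x : (Fin n → Fin 4) × (Fin n → Bool)) (i : Fin n) :
    (benderKnuth x).1 i = x.1 (i + numOnes x.1) + 2 := rfl

theorem snd_benderKnuth_apply (x : (Fin n → Fin 4) × (Fin n → Bool)) (i : Fin n) :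
    (benderKnuth x).2 i = x.2 (i + numOnes x.1) := rfl

theorem numOnes_benderKnuth (x : (Fin n → Fin 4) × (Fin n → Bool)) :
    numOnes (benderKnuth x).1 = n - numOnes x.1 :=
  calc numOnes (benderKnuth x).1 = #{j | ((x.1 j + 2 : Fin 4) : ℕ) < 2} :=
        Fin.card_filter_comp_add_right (fun j => ((x.1 j + 2 : Fin 4) : ℕ) < 2) _
    _ = #{j | 2 ≤ (x.1 j : ℕ)} := by simp only [fin4_val_add_two_lt_two_iff]
    _ = n - numOnes x.1 := by
        have hsplit := card_filter_add_card_filter_not (s := univ) fun i => (x.1 i : ℕ) < 2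
        simp only [card_fin, not_lt] at hsplit
        unfold numOnes
        omega

theorem benderKnuth_involutive : Function.Involutive (benderKnuth (n := n)) := by
  intro x
  have hc : ((numOnes (benderKnuth x).1 : ℕ) : Fin n) + numOnes x.1 = 0 := by
    rw [numOnes_benderKnuth, ← Nat.cast_add, Nat.sub_add_cancel (numOnes_le _), Fin.natCast_self]
  refine Prod.ext (funext fun i => ?_) (funext fun i => ?_)
  · rw [fst_benderKnuth_apply, fst_benderKnuth_apply, add_assoc i, hc, add_zero,
      fin4_add_two_add_two]
  · rw [snd_benderKnuth_apply, snd_benderKnuth_apply, add_assoc i, hc, add_zero]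

theorem monotone_fst_benderKnuth {x : (Fin n → Fin 4) × (Fin n → Bool)} (hw : Monotone x.1) :
    Monotone (benderKnuth x).1 := by
  intro i j hij
  have hm := numOnes_le x.1
  have hsplit := val_lt_numOnes_iff hw
  have hi := Fin.val_add_natCast_of_le i hm
  have hj := Fin.val_add_natCast_of_le j hm
  have hij' : (i : ℕ) ≤ j := hij
  apply fin4_add_two_le_add_two
  by_cases hseam : (i : ℕ) + numOnes x.1 < n ∧ n ≤ (j : ℕ) + numOnes x.1
  · left
    rw [← not_lt, ← hsplit, ← hsplit]
    split_ifs at hi hj <;> omega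
  · right
    refine ⟨hw (Fin.le_def.2 ?_), by rw [← hsplit, ← hsplit]; split_ifs at hi hj <;> omega⟩
    split_ifs at hi hj <;> omega

theorem benderKnuth_adjacent {x : (Fin n → Fin 4) × (Fin n → Bool)}
    (hs0 : ∀ i : Fin n, (i : ℕ) = 0 → x.2 i = true)
    (hadj : ∀ i j : Fin n, (j : ℕ) = (i : ℕ) + 1 → x.2 j = false → x.1 j = x.1 i) :
    ∀ i j : Fin n, (j : ℕ) = (i : ℕ) + 1 → (benderKnuth x).2 j = false →
      (benderKnuth x).1 j = (benderKnuth x).1 i := by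
  intro i j hij hj
  rcases Fin.val_add_of_val_eq_succ (numOnes x.1 : Fin n) hij with hsucc | hzero
  · rw [fst_benderKnuth_apply, fst_benderKnuth_apply, hadj _ _ hsucc hj]
  · -- the rotation wraps around at `j`, which is old position 0
    exact absurd (hj.symm.trans (hs0 _ hzero)) Bool.false_ne_true

theorem snd_benderKnuth_of_val_eq_zero {x : (Fin n → Fin 4) × (Fin n → Bool)}
    (hw : Monotone x.1)
    (hs0 : ∀ i : Fin n, (i : ℕ) = 0 → x.2 i = true)
    (hadj : ∀ i j : Fin n, (j : ℕ) = (i : ℕ) + 1 → x.2 j = false → x.1 j = x.1 i) :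
    ∀ i : Fin n, (i : ℕ) = 0 → (benderKnuth x).2 i = true := by
  intro i hi
  rw [snd_benderKnuth_apply]
  have hsplit := val_lt_numOnes_iff hw
  have hle := numOnes_le x.1
  have hc := Fin.val_add_natCast_of_le i hle
  rw [hi, zero_add] at hc
  by_cases hm : numOnes x.1 = 0 ∨ numOnes x.1 = n
  · exact hs0 _ (by split_ifs at hc <;> omega)
  -- otherwise position `numOnes x.1` carries the first letter 2′ or 2, so it opens a bar
  by_contra hne
  let p : Fin n := ⟨numOnes x.1 - 1, by omega⟩
  have heq := hadj p (i + numOnes x.1) (by simp only [p]; split_ifs at hc <;> omega)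
    (by simpa using hne)
  have hp : (x.1 p : ℕ) < 2 := (hsplit p).1 (by simp only [p]; omega)
  have hnot : ¬ (x.1 (i + numOnes x.1) : ℕ) < 2 := fun h => by
    have := (hsplit _).2 h
    split_ifs at hc <;> omega
  exact hnot (heq ▸ hp)

theorem IsOneRowShBT.benderKnuth {x : (Fin n → Fin 4) × (Fin n → Bool)} {a b : ℕ}
    (h : IsOneRowShBT n x a b) : IsOneRowShBT n (benderKnuth x) b a := by
  obtain ⟨hw, h0, h2, hs0, hadj, ha, hb⟩ := h
  have hrot := fun (p : Fin n → Prop) [DecidablePred p] =>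
    Fin.card_filter_comp_add_right p (numOnes x.1 : Fin n)
  refine ⟨monotone_fst_benderKnuth hw, ?_, ?_, snd_benderKnuth_of_val_eq_zero hw hs0 hadj,
    benderKnuth_adjacent hs0 hadj, ?_, ?_⟩
  · exact (hrot fun j => x.1 j + 2 = 0).trans_le (by simpa only [fin4_add_two_eq_zero_iff])
  · exact (hrot fun j => x.1 j + 2 = 2).trans_le (by simpa only [fin4_add_two_eq_two_iff])
  · exact (hrot fun j => x.2 j = true ∧ ((x.1 j + 2 : Fin 4) : ℕ) < 2).trans
      (by simpa only [fin4_val_add_two_lt_two_iff])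
  · exact (hrot fun j => x.2 j = true ∧ 2 ≤ ((x.1 j + 2 : Fin 4) : ℕ)).trans
      (by simpa only [fin4_two_le_val_add_two_iff])

end

/-- For all a, b, the number of one-row semistandard shifted bar tableaux of shape (n) with
    entries in {1′, 1, 2′, 2} of weight (a, b) equals the number of weight (b, a). -/
theorem stmt12 (n : ℕ) (hn : 1 ≤ n) (a b : ℕ) :
    ((Finset.univ : Finset ((Fin n → Fin 4) × (Fin n → Bool))).filter
        (fun x => IsOneRowShBT n x a b)).card
    = ((Finset.univ : Finset ((Fin n → Fin 4) × (Fin n → Bool))).filter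
        (fun x => IsOneRowShBT n x b a)).card := by
  have : NeZero n := ⟨by omega⟩
  refine card_equiv (benderKnuth_involutive.toPerm _) fun x => ?_
  simp only [mem_filter, mem_univ, true_and, Function.Involutive.coe_toPerm]
  exact ⟨IsOneRowShBT.benderKnuth, fun h => benderKnuth_involutive x ▸ h.benderKnuth⟩
end

section
/- For every integer n ≥ 2, the multivariate generating functions over one-row shifted plane partitions satisfy gq^comb_{(n)} = 2·gp^comb_{(n)} + β·gp^comb_{(n−1)}, as an identity of formal power series in ℤ[β][[x_1, x_2, …]]. -/
open scoped Classical

/-- The combinatorial generating function gq^comb_{(m)} of the one-row shape (m): a shifted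
    plane partition of shape (m) is a weakly increasing sequence a : Fin m → ℕ in the
    alphabet 1′ < 1 < 2′ < 2 < ⋯ encoded as 0 < 1 < 2 < 3 < ⋯ (the value v represents the
    letter v/2 + 1, primed iff v even).  Its weight at the letter k+1 is the number of
    positions equal to the unprimed letter (code 2k+1) plus 1 if the primed letter
    (code 2k) occurs.  The coefficient of x^α is (−β)^{m − |α|} times the number of such
    sequences of weight α, encoding gq^comb_{(m)} = ∑_T (−β)^{m−|wt(T)|} x^{wt(T)}. -/
noncomputable def gqrow (m : ℕ) : MvPowerSeries ℕ (Polynomial ℤ) :=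
  fun α =>
    (Nat.card {a : Fin m → ℕ // Monotone a ∧
        ∀ k : ℕ, α k = Set.ncard {j : Fin m | a j = 2 * k + 1}
          + (if ∃ j : Fin m, a j = 2 * k then 1 else 0)} : Polynomial ℤ)
      * (-Polynomial.X) ^ (m - α.sum (fun _ v => v))

/-- The combinatorial generating function gp^comb_{(m)}: the same sum as `gqrow m`,
    restricted to sequences whose first (diagonal) entry is primed (even code). -/
noncomputable def gprow (m : ℕ) : MvPowerSeries ℕ (Polynomial ℤ) :=
  fun α =>
    (Nat.card {a : Fin m → ℕ // Monotone a ∧ (∀ h : 0 < m, a ⟨0, h⟩ % 2 = 0) ∧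
        ∀ k : ℕ, α k = Set.ncard {j : Fin m | a j = 2 * k + 1}
          + (if ∃ j : Fin m, a j = 2 * k then 1 else 0)} : Polynomial ℤ)
      * (-Polynomial.X) ^ (m - α.sum (fun _ v => v))

/-!
Split the rows by their diagonal entry: gq_{(n)} counts rows with primed diagonal (gp_{(n)}) plus
rows with unprimed diagonal. A row with primed diagonal i′ either has a₂ > i′, and replacing the
diagonal by i is a weight-preserving bijection onto the rows with unprimed diagonal; or a₂ = i′,
and deleting the diagonal is a weight-preserving bijection onto the primed-diagonal rows of length
n − 1, because a repeated primed letter is counted only once. So for every weight α,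
#Q_n(α) = 2 #P_n(α) − #P_{n−1}(α), and the factor β matches the sign change
β (−β)^{n−1−|α|} = −(−β)^{n−|α|}. When |α| = n no row of length n − 1 has weight α, as every row
has at most as many letters in its weight as it has entries.
-/

noncomputable def rowWeight {m : ℕ} (a : Fin m → ℕ) (k : ℕ) : ℕ :=
  Set.ncard {j : Fin m | a j = 2 * k + 1} + (if ∃ j : Fin m, a j = 2 * k then 1 else 0)

def HasWeight {m : ℕ} (a : Fin m → ℕ) (α : ℕ →₀ ℕ) : Prop :=
  ∀ k, α k = rowWeight a k

def qRows (m : ℕ) (α : ℕ →₀ ℕ) : Set (Fin m → ℕ) :=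
  {a | Monotone a ∧ HasWeight a α}

def pRows (m : ℕ) (α : ℕ →₀ ℕ) : Set (Fin m → ℕ) :=
  {a | Monotone a ∧ (∀ h : 0 < m, a ⟨0, h⟩ % 2 = 0) ∧ HasWeight a α}

def unprimedRows (m : ℕ) (α : ℕ →₀ ℕ) : Set (Fin (m + 1) → ℕ) :=
  {a | Monotone a ∧ a 0 % 2 = 1 ∧ HasWeight a α}

section

variable {m : ℕ} {α : ℕ →₀ ℕ}

lemma ncard_setOf_eq_sum {ι : Type*} [Fintype ι] (p : ι → Prop) [DecidablePred p] :
    {j | p j}.ncard = ∑ j, if p j then 1 else 0 := by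
  rw [Set.ncard_eq_toFinset_card', Set.toFinset_ofPred, Finset.card_filter]

lemma rowWeight_cons (x : ℕ) (t : Fin m → ℕ) (k : ℕ) :
    rowWeight (Fin.cons x t : Fin (m + 1) → ℕ) k =
      rowWeight t k + (if x = 2 * k + 1 then 1 else 0)
        + (if x = 2 * k ∧ ¬∃ j, t j = 2 * k then 1 else 0) := by
  simp only [rowWeight, ncard_setOf_eq_sum, Fin.sum_univ_succ, Fin.cons_zero, Fin.cons_succ,
    Fin.exists_fin_succ]
  split_ifs <;> grind

lemma rowWeight_cons_of_exists_eq {x : ℕ} {t : Fin m → ℕ} (hx : x % 2 = 0)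
    (h : ∃ j, t j = x) : rowWeight (Fin.cons x t : Fin (m + 1) → ℕ) = rowWeight t := by
  funext k
  rw [rowWeight_cons]
  split_ifs <;> grind

lemma rowWeight_cons_succ {x : ℕ} {t : Fin m → ℕ} (hx : x % 2 = 0) (h : ∀ j, t j ≠ x) :
    rowWeight (Fin.cons (x + 1) t : Fin (m + 1) → ℕ) = rowWeight (Fin.cons x t) := by
  funext k
  simp only [rowWeight_cons]
  split_ifs <;> grind

lemma rowWeight_div_two_ne_zero (a : Fin m → ℕ) (j : Fin m) :
    rowWeight a (a j / 2) ≠ 0 := by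
  rcases Nat.mod_two_eq_zero_or_one (a j) with h | h
  · have : ∃ i, a i = 2 * (a j / 2) := ⟨j, by omega⟩
    simp [rowWeight, this]
  · have : {i | a i = 2 * (a j / 2) + 1}.ncard ≠ 0 :=
      Set.ncard_ne_zero_of_mem (a := j) (by simp only [Set.mem_ofPred_eq]; omega)
    simp only [rowWeight]
    omega

lemma sum_rowWeight_le (a : Fin m → ℕ) (s : Finset ℕ) : ∑ k ∈ s, rowWeight a k ≤ m := by
  induction m with
  | zero => simp [rowWeight, ncard_setOf_eq_sum]
  | succ m ih =>
    cases a using Fin.consCases with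
    | _ x t =>
    have head_le : ∑ k ∈ s, ((if x = 2 * k + 1 then 1 else 0)
        + (if x = 2 * k ∧ ¬∃ j, t j = 2 * k then 1 else 0)) ≤ 1 :=
      calc _ ≤ ∑ k ∈ s, if x / 2 = k then 1 else 0 :=
            Finset.sum_le_sum fun k _ => by split_ifs <;> omega
        _ ≤ 1 := by rw [Finset.sum_ite_eq]; split_ifs <;> simp
    simp only [rowWeight_cons, add_assoc, Finset.sum_add_distrib] at head_le ⊢
    linarith [ih t]

lemma HasWeight.degree_le {a : Fin m → ℕ} (h : HasWeight a α) :
    α.sum (fun _ v => v) ≤ m :=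
  calc α.sum (fun _ v => v) = ∑ k ∈ α.support, rowWeight a k :=
        Finset.sum_congr rfl fun k _ => h k
    _ ≤ m := sum_rowWeight_le a _

lemma finite_setOf_hasWeight : {a : Fin m → ℕ | HasWeight a α}.Finite := by
  refine (Set.Finite.pi fun _ =>
    (α.support.biUnion fun k => {2 * k, 2 * k + 1}).finite_toSet).subset ?_
  intro a ha j _
  have : a j / 2 ∈ α.support := by
    rw [Finsupp.mem_support_iff, ha]
    exact rowWeight_div_two_ne_zero a j
  simp only [Finset.coe_biUnion, Set.mem_iUnion]
  exact ⟨a j / 2, this, by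
    simp only [Finset.coe_insert, Finset.coe_singleton, Set.mem_insert_iff, Set.mem_singleton_iff]
    omega⟩

lemma finite_pRows : (pRows m α).Finite :=
  finite_setOf_hasWeight.subset fun _ ha => ha.2.2

lemma finite_unprimedRows : (unprimedRows m α).Finite :=
  finite_setOf_hasWeight.subset fun _ ha => ha.2.2

lemma pRows_eq_empty (h : m < α.sum (fun _ v => v)) : pRows m α = ∅ :=
  Set.eq_empty_of_forall_notMem fun _ ha => (ha.2.2.degree_le.trans_lt h).false

lemma mem_pRows_succ {a : Fin (m + 1) → ℕ} :
    a ∈ pRows (m + 1) α ↔ Monotone a ∧ a 0 % 2 = 0 ∧ HasWeight a α :=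
  and_congr_right fun _ => and_congr_left fun _ => ⟨fun h => h m.succ_pos, fun h _ => h⟩

lemma qRows_succ_eq_union :
    qRows (m + 1) α = unprimedRows m α ∪ pRows (m + 1) α := by
  ext a
  rw [Set.mem_union, mem_pRows_succ]
  constructor
  · rintro ⟨hmono, hw⟩
    rcases Nat.mod_two_eq_zero_or_one (a 0) with h | h
    · exact Or.inr ⟨hmono, h, hw⟩
    · exact Or.inl ⟨hmono, h, hw⟩
  · rintro (⟨hmono, -, hw⟩ | ⟨hmono, -, hw⟩) <;> exact ⟨hmono, hw⟩

lemma ncard_qRows_succ :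
    (qRows (m + 1) α).ncard = (unprimedRows m α).ncard + (pRows (m + 1) α).ncard := by
  have hdisj : Disjoint (unprimedRows m α) (pRows (m + 1) α) :=
    Set.disjoint_left.2 fun a ⟨_, hodd, _⟩ ha => by
      have := (mem_pRows_succ.1 ha).2.1
      omega
  rw [qRows_succ_eq_union, Set.ncard_union_eq hdisj finite_unprimedRows finite_pRows]

lemma monotone_finCons {β : Type*} [Preorder β] {x : β} {t : Fin (m + 1) → β} :
    Monotone (Fin.cons x t : Fin (m + 2) → β) ↔ x ≤ t 0 ∧ Monotone t :=
  monotone_vecCons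

def primeHead (a : Fin (m + 1) → ℕ) : Fin (m + 1) → ℕ :=
  Fin.cons (a 0 - 1) (Fin.tail a)

def doubleHead (t : Fin (m + 1) → ℕ) : Fin (m + 2) → ℕ :=
  Fin.cons (t 0) t

lemma primeHead_mem_pRows {a : Fin (m + 2) → ℕ} (ha : a ∈ unprimedRows (m + 1) α) :
    primeHead a ∈ pRows (m + 2) α := by
  cases a using Fin.consCases with
  | _ x t =>
  obtain ⟨hmono, hodd, hw⟩ := ha
  rw [monotone_finCons] at hmono
  simp only [Fin.cons_zero] at hodd
  have heven : (x - 1) % 2 = 0 := by omega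
  have hne : ∀ j, t j ≠ x - 1 := fun j => by
    have := hmono.2 (Fin.zero_le j)
    omega
  simp only [primeHead, Fin.cons_zero, Fin.tail_cons]
  refine mem_pRows_succ.2 ⟨monotone_finCons.2 ⟨by omega, hmono.2⟩, heven, fun k => ?_⟩
  rw [hw k, ← rowWeight_cons_succ heven hne, Nat.sub_add_cancel (by omega)]

lemma doubleHead_mem_pRows {t : Fin (m + 1) → ℕ} (ht : t ∈ pRows (m + 1) α) :
    doubleHead t ∈ pRows (m + 2) α := by
  obtain ⟨hmono, heven, hw⟩ := mem_pRows_succ.1 ht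
  refine mem_pRows_succ.2 ⟨monotone_finCons.2 ⟨le_rfl, hmono⟩, heven, fun k => ?_⟩
  rw [doubleHead, rowWeight_cons_of_exists_eq heven ⟨0, rfl⟩, hw k]

lemma pRows_subset_union :
    pRows (m + 2) α ⊆ primeHead '' unprimedRows (m + 1) α ∪ doubleHead '' pRows (m + 1) α := by
  intro a ha
  cases a using Fin.consCases with
  | _ x t =>
  rw [mem_pRows_succ, monotone_finCons] at ha
  obtain ⟨⟨hxt, hmono⟩, heven, hw⟩ := ha
  simp only [Fin.cons_zero] at heven
  rcases hxt.eq_or_lt with rfl | hlt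
  · refine Or.inr ⟨t, mem_pRows_succ.2 ⟨hmono, heven, fun k => ?_⟩, rfl⟩
    rw [hw k, rowWeight_cons_of_exists_eq heven ⟨0, rfl⟩]
  · have hne : ∀ j, t j ≠ x := fun j => (hlt.trans_le (hmono (Fin.zero_le j))).ne'
    have hodd : (Fin.cons (x + 1) t : Fin (m + 2) → ℕ) 0 % 2 = 1 := by
      rw [Fin.cons_zero]
      omega
    refine Or.inl ⟨Fin.cons (x + 1) t, ⟨monotone_finCons.2 ⟨hlt, hmono⟩, hodd,
      fun k => by rw [hw k, rowWeight_cons_succ heven hne]⟩, by simp [primeHead]⟩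

lemma disjoint_image_primeHead_image_doubleHead :
    Disjoint (primeHead '' unprimedRows (m + 1) α) (doubleHead '' pRows (m + 1) α) := by
  rw [Set.disjoint_left]
  rintro _ ⟨a, ⟨hmono, hodd, -⟩, rfl⟩ ⟨t, -, h⟩
  obtain ⟨h0, rfl⟩ := Fin.cons_inj.1 h
  have := hmono (Fin.zero_le 1)
  simp only [Fin.tail, Fin.succ_zero_eq_one] at h0
  omega

lemma primeHead_injOn : Set.InjOn primeHead (unprimedRows m α) := by
  rintro a ⟨-, ha, -⟩ b ⟨-, hb, -⟩ h
  obtain ⟨h0, htail⟩ := Fin.cons_inj.1 h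
  rw [← Fin.cons_self_tail a, ← Fin.cons_self_tail b, htail, show a 0 = b 0 by omega]

lemma doubleHead_injective : Function.Injective (doubleHead : (Fin (m + 1) → ℕ) → _) :=
  fun _ _ h => (Fin.cons_inj.1 h).2

lemma ncard_pRows_add_two :
    (pRows (m + 2) α).ncard = (unprimedRows (m + 1) α).ncard + (pRows (m + 1) α).ncard := by
  have hcover : pRows (m + 2) α =
      primeHead '' unprimedRows (m + 1) α ∪ doubleHead '' pRows (m + 1) α :=
    pRows_subset_union.antisymm <| Set.union_subset
      (Set.image_subset_iff.2 fun _ => primeHead_mem_pRows)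
      (Set.image_subset_iff.2 fun _ => doubleHead_mem_pRows)
  rw [hcover, Set.ncard_union_eq disjoint_image_primeHead_image_doubleHead
    (finite_unprimedRows.image _) (finite_pRows.image _),
    primeHead_injOn.ncard_image, doubleHead_injective.injOn.ncard_image]

lemma coeff_gqrow :
    MvPowerSeries.coeff α (gqrow m) =
      ((qRows m α).ncard : Polynomial ℤ) * (-Polynomial.X) ^ (m - α.sum fun _ v => v) :=
  rfl

lemma coeff_gprow :
    MvPowerSeries.coeff α (gprow m) =
      ((pRows m α).ncard : Polynomial ℤ) * (-Polynomial.X) ^ (m - α.sum fun _ v => v) :=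
  rfl

end

/-- For n ≥ 2, gq^comb_{(n)} = 2 gp^comb_{(n)} + β gp^comb_{(n−1)} as formal power series
    in ℤ[β][[x₁, x₂, …]]. -/
theorem stmt16 (n : ℕ) (hn : 2 ≤ n) :
    gqrow n = 2 * gprow n
      + (MvPowerSeries.C (σ := ℕ) (R := Polynomial ℤ)) Polynomial.X * gprow (n - 1) := by
  obtain ⟨m, rfl⟩ : ∃ m, n = m + 2 := ⟨n - 2, by omega⟩
  refine MvPowerSeries.ext fun α => ?_
  rw [Nat.add_succ_sub_one, map_add, two_mul, map_add, MvPowerSeries.coeff_C_mul, coeff_gqrow,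
    coeff_gprow, coeff_gprow, ncard_qRows_succ, ncard_pRows_add_two]
  rcases le_or_gt (α.sum fun _ v => v) (m + 1) with hd | hd
  · rw [show m + 2 - α.sum (fun _ v => v) = m + 1 - α.sum (fun _ v => v) + 1 by omega, pow_succ]
    push_cast
    ring
  · rw [pRows_eq_empty hd, Set.ncard_empty]
    push_cast
    ring
end
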